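/- arXiv:2110.09348 — 7 statements merged into one kernel-verified Lean document; each statement's English description precedes it below -/
import Mathlib

section
/- Let ℓ : (Fin N → ℝ^m) → (Fin N → ℝ^m) → ℝ be differentiable, let x_i, x_i' ∈ ℝ^n for i ∈ Fin N, and define L : Matrix (Fin p) (Fin n) ℝ → Matrix (Fin m) (Fin p) ℝ → ℝ by L(W₁, W₂) := ℓ (fun i => W₂ *ᵥ (W₁ *ᵥ x_i)) (fun i => W₂ *ᵥ (W₁ *ᵥ x_i')). Then the partial gradients of L with respect to the Frobenius inner product are ∇_{W₁} L = W₂ᵀ G and ∇_{W₂} L = G W₁ᵀ, where G := Σ_i ( g_i x_iᵀ + g_i' (x_i')ᵀ ) and g_i (resp. g_i') is the gradient of ℓ with respect to its i-th first-slot (resp. second-slot) vector argument evaluated at the embeddings z_i = W₂W₁x_i, z_i' = W₂W₁x_i'. Consequently the gradient flow satisfies Ẇ₁ = −W₂ᵀ G and Ẇ₂ = −G W₁ᵀ. -/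
open Matrix Finset

attribute [local instance] Matrix.frobeniusNormedAddCommGroup Matrix.frobeniusNormedSpace

lemma dot_trace {m q : ℕ} (g : Fin m → ℝ) (v : Fin q → ℝ)
    (M : Matrix (Fin m) (Fin q) ℝ) :
    g ⬝ᵥ (M *ᵥ v) = Matrix.trace (vecMulVec v g * M) := by
  simp only [Matrix.trace, Matrix.diag, Matrix.mul_apply, Matrix.vecMulVec_apply,
    dotProduct, Matrix.mulVec, Finset.mul_sum, Finset.sum_mul]
  rw [Finset.sum_comm]
  exact Finset.sum_congr rfl fun a _ => Finset.sum_congr rfl fun b _ => by ring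

lemma vecMulVec_transpose' {m q : ℕ} (u : Fin m → ℝ) (v : Fin q → ℝ) :
    (vecMulVec u v)ᵀ = vecMulVec v u := by
  ext i j; simp [vecMulVec_apply, mul_comm]

lemma mul_vecMulVec' {m q r : ℕ} (M : Matrix (Fin m) (Fin q) ℝ)
    (v : Fin q → ℝ) (g : Fin r → ℝ) :
    M * vecMulVec v g = vecMulVec (M *ᵥ v) g := by
  ext i j
  simp [Matrix.mul_apply, vecMulVec_apply, Matrix.mulVec, dotProduct,
    Finset.sum_mul, mul_assoc]


/-- **Lemma (gradient flow of the two-layer linear contrastive model).**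
Let `ℓ` be a differentiable loss of the `2N` embedding vectors, and let
`L W₁ W₂ = ℓ (fun i => W₂ (W₁ x_i)) (fun i => W₂ (W₁ x_i'))`.  Then the partial
Frobenius gradients of `L` are `∇_{W₁} L = W₂ᵀ G` and `∇_{W₂} L = G W₁ᵀ` with
`G = ∑ i (g_i x_iᵀ + g_i' (x_i')ᵀ)`, where `g_i` (resp. `g_i'`) is the gradient
of `ℓ` with respect to its `i`-th first-slot (resp. second-slot) vector
argument at the embeddings `z_i = W₂ W₁ x_i`, `z_i' = W₂ W₁ x_i'`.
Consequently the gradient flow satisfies `Ẇ₁ = −W₂ᵀ G` and `Ẇ₂ = −G W₁ᵀ`. -/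
theorem two_layer_gradient_flow (N m n p : ℕ)
    (ℓ : (Fin N → (Fin m → ℝ)) × (Fin N → (Fin m → ℝ)) → ℝ)
    (hℓ : Differentiable ℝ ℓ)
    (x x' : Fin N → Fin n → ℝ)
    (L : Matrix (Fin p) (Fin n) ℝ → Matrix (Fin m) (Fin p) ℝ → ℝ)
    (hL : L = fun W₁ W₂ =>
      ℓ (fun i => W₂ *ᵥ (W₁ *ᵥ x i), fun i => W₂ *ᵥ (W₁ *ᵥ x' i))) :
    ∀ (W₁ : Matrix (Fin p) (Fin n) ℝ) (W₂ : Matrix (Fin m) (Fin p) ℝ),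
      ∀ g g' : Fin N → Fin m → ℝ,
      (∀ i a, g i a =
        fderiv ℝ ℓ (fun i => W₂ *ᵥ (W₁ *ᵥ x i), fun i => W₂ *ᵥ (W₁ *ᵥ x' i))
          (Pi.single i (Pi.single a 1), 0)) →
      (∀ i a, g' i a =
        fderiv ℝ ℓ (fun i => W₂ *ᵥ (W₁ *ᵥ x i), fun i => W₂ *ᵥ (W₁ *ᵥ x' i))
          (0, Pi.single i (Pi.single a 1))) →
      ∀ G : Matrix (Fin m) (Fin n) ℝ,
      G = ∑ i, (vecMulVec (g i) (x i) + vecMulVec (g' i) (x' i)) →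
      DifferentiableAt ℝ (fun A => L A W₂) W₁ ∧
      DifferentiableAt ℝ (fun B => L W₁ B) W₂ ∧
      (∀ H : Matrix (Fin p) (Fin n) ℝ,
        fderiv ℝ (fun A => L A W₂) W₁ H = Matrix.trace ((W₂ᵀ * G)ᵀ * H)) ∧
      (∀ H : Matrix (Fin m) (Fin p) ℝ,
        fderiv ℝ (fun B => L W₁ B) W₂ H = Matrix.trace ((G * W₁ᵀ)ᵀ * H)) := by
  intro W₁ W₂ g g' hg hg' G hG
  set z : (Fin N → (Fin m → ℝ)) × (Fin N → (Fin m → ℝ)) :=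
    (fun i => W₂ *ᵥ (W₁ *ᵥ x i), fun i => W₂ *ᵥ (W₁ *ᵥ x' i)) with hz
  set D := fderiv ℝ ℓ z with hDdef
  -- the two linear parametrizations
  let Φ₁ : Matrix (Fin p) (Fin n) ℝ →L[ℝ]
      ((Fin N → (Fin m → ℝ)) × (Fin N → (Fin m → ℝ))) :=
    LinearMap.toContinuousLinearMap
      { toFun := fun A => (fun i => W₂ *ᵥ (A *ᵥ x i), fun i => W₂ *ᵥ (A *ᵥ x' i))
        map_add' := by
          intro A B
          refine Prod.ext ?_ ?_ <;> funext i <;>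
            simp [Matrix.add_mulVec, Matrix.mulVec_add]
        map_smul' := by
          intro c A
          refine Prod.ext ?_ ?_ <;> funext i <;>
            simp [Matrix.smul_mulVec, Matrix.mulVec_smul] }
  let Φ₂ : Matrix (Fin m) (Fin p) ℝ →L[ℝ]
      ((Fin N → (Fin m → ℝ)) × (Fin N → (Fin m → ℝ))) :=
    LinearMap.toContinuousLinearMap
      { toFun := fun B => (fun i => B *ᵥ (W₁ *ᵥ x i), fun i => B *ᵥ (W₁ *ᵥ x' i))
        map_add' := by
          intro A B
          refine Prod.ext ?_ ?_ <;> funext i <;>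
            simp [Matrix.add_mulVec, Matrix.add_mul]
        map_smul' := by
          intro c A
          refine Prod.ext ?_ ?_ <;> funext i <;>
            simp [Matrix.smul_mulVec, Matrix.smul_mul] }
  have key1 : HasFDerivAt (fun A => L A W₂) (D.comp Φ₁) W₁ := by
    have h := (hℓ z).hasFDerivAt.comp W₁ Φ₁.hasFDerivAt
    subst hL
    exact h
  have key2 : HasFDerivAt (fun B => L W₁ B) (D.comp Φ₂) W₂ := by
    have h := (hℓ z).hasFDerivAt.comp W₂ Φ₂.hasFDerivAt
    subst hL
    exact h
  -- explicit formula for D on pairs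
  have hD : ∀ u v : Fin N → Fin m → ℝ,
      D (u, v) = (∑ i, g i ⬝ᵥ u i) + ∑ i, g' i ⬝ᵥ v i := by
    intro u v
    have hu : (u, v) =
        (∑ i, ∑ a, u i a • ((Pi.single i (Pi.single a 1) :
            Fin N → Fin m → ℝ), (0 : Fin N → Fin m → ℝ)))
        + ∑ i, ∑ a, v i a • ((0 : Fin N → Fin m → ℝ),
            (Pi.single i (Pi.single a 1) : Fin N → Fin m → ℝ)) := by
      refine Prod.ext ?_ ?_ <;> funext j b <;>
        simp [Pi.single_apply, Finset.sum_ite_eq, Finset.sum_ite_eq',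
          Prod.fst_sum, Prod.snd_sum]
    rw [hu, map_add, map_sum, map_sum]
    simp only [map_sum, _root_.map_smul, smul_eq_mul]
    congr 1 <;> refine Finset.sum_congr rfl fun i _ => ?_
    · rw [dotProduct]
      exact Finset.sum_congr rfl fun a _ => by rw [← hg i a]; ring
    · rw [dotProduct]
      exact Finset.sum_congr rfl fun a _ => by rw [← hg' i a]; ring
  refine ⟨key1.differentiableAt, key2.differentiableAt, ?_, ?_⟩
  · intro H
    rw [key1.fderiv]
    have hΦ : Φ₁ H = (fun i => (W₂ * H) *ᵥ x i, fun i => (W₂ * H) *ᵥ x' i) := by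
      refine Prod.ext ?_ ?_ <;> funext i <;> simp [Φ₁, Matrix.mulVec_mulVec]
    have : D.comp Φ₁ H = D (Φ₁ H) := rfl
    rw [this, hΦ, hD]
    have hGT : Gᵀ = ∑ i, (vecMulVec (x i) (g i) + vecMulVec (x' i) (g' i)) := by
      rw [hG, Matrix.transpose_sum]
      exact Finset.sum_congr rfl fun i _ => by
        rw [Matrix.transpose_add, vecMulVec_transpose', vecMulVec_transpose']
    rw [Matrix.transpose_mul, Matrix.transpose_transpose, Matrix.mul_assoc, hGT,
      Matrix.sum_mul, Matrix.trace_sum]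
    rw [← Finset.sum_add_distrib]
    refine Finset.sum_congr rfl fun i _ => ?_
    rw [dot_trace, dot_trace, Matrix.add_mul, Matrix.trace_add]
  · intro H
    rw [key2.fderiv]
    have hΦ : Φ₂ H = (fun i => H *ᵥ (W₁ *ᵥ x i), fun i => H *ᵥ (W₁ *ᵥ x' i)) := rfl
    have : D.comp Φ₂ H = D (Φ₂ H) := rfl
    rw [this, hΦ, hD]
    have hGW : (G * W₁ᵀ)ᵀ =
        ∑ i, (vecMulVec (W₁ *ᵥ x i) (g i) + vecMulVec (W₁ *ᵥ x' i) (g' i)) := by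
      rw [Matrix.transpose_mul, Matrix.transpose_transpose, hG, Matrix.transpose_sum,
        Matrix.mul_sum]
      refine Finset.sum_congr rfl fun i _ => ?_
      rw [Matrix.transpose_add, vecMulVec_transpose', vecMulVec_transpose',
        Matrix.mul_add, mul_vecMulVec', mul_vecMulVec']
    rw [hGW, Matrix.sum_mul, Matrix.trace_sum, ← Finset.sum_add_distrib]
    refine Finset.sum_congr rfl fun i _ => ?_
    rw [dot_trace, dot_trace, Matrix.add_mul, Matrix.trace_add]
end

section
/- For N ≥ 2 and vectors z_i, z_i' ∈ ℝ^d (i ∈ Fin N), define the InfoNCE loss L := −Σ_i log( exp(−‖z_i−z_i'‖²/2) / Z_i ), where Z_i := Σ_{j≠i} exp(−‖z_i−z_j‖²/2) + exp(−‖z_i−z_i'‖²/2), and set α_{ij} := exp(−‖z_i−z_j‖²/2)/Z_i for j ≠ i and α_{ii} := exp(−‖z_i−z_i'‖²/2)/Z_i. Then L, viewed as a differentiable function of the 2N vectors (z_1,…,z_N, z_1',…,z_N'), has partial gradients ∂L/∂z_i = Σ_{j≠i} α_{ij}(z_j − z_i') + Σ_{j≠i} α_{ji}(z_j − z_i) and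 ∂L/∂z_i' = Σ_{j≠i} α_{ij}(z_i' − z_i) for every i. -/
/-!
The loss is `-∑ k, log α_kk`, and each `log α_kk` is a log-softmax whose logits are
`-‖z_k - z_j‖² / 2` (`j ≠ k`) and the positive logit `-‖z_k - z_k'‖² / 2`. The gradient of a
log-softmax is the gradient of the positive logit minus the softmax average of the gradients of
all logits. The vector `z_i` enters anchor `i`'s term through every logit, and anchor `k`'s term
(`k ≠ i`) only through the negative logit of `z_i`; `z_i'` enters only the positive logit of
anchor `i`. Collecting terms with `∑ j, α_ij = 1` gives both formulas.
-/

open Finset Function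

section Gradient
variable {E : Type*} [NormedAddCommGroup E] [InnerProductSpace ℝ E] [CompleteSpace E]
  {f g : E → ℝ} {f' g' x : E}

theorem HasGradientAt.add (hf : HasGradientAt f f' x) (hg : HasGradientAt g g' x) :
    HasGradientAt (fun v => f v + g v) (f' + g') x := by
  rw [hasGradientAt_iff_hasFDerivAt, map_add] at *
  exact hf.add hg

theorem HasGradientAt.sub (hf : HasGradientAt f f' x) (hg : HasGradientAt g g' x) :
    HasGradientAt (fun v => f v - g v) (f' - g') x := by
  rw [hasGradientAt_iff_hasFDerivAt, map_sub] at *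
  exact hf.sub hg

theorem HasGradientAt.neg (hf : HasGradientAt f f' x) :
    HasGradientAt (fun v => -f v) (-f') x := by
  rw [hasGradientAt_iff_hasFDerivAt, map_neg] at *
  exact hf.neg

theorem HasGradientAt.sum {ι : Type*} {s : Finset ι} {f : ι → E → ℝ} {f' : ι → E}
    (hf : ∀ i ∈ s, HasGradientAt (f i) (f' i) x) :
    HasGradientAt (fun v => ∑ i ∈ s, f i v) (∑ i ∈ s, f' i) x := by
  simp only [hasGradientAt_iff_hasFDerivAt, map_sum] at *
  exact HasFDerivAt.fun_sum hf

theorem HasGradientAt.exp (hf : HasGradientAt f f' x) :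
    HasGradientAt (fun v => Real.exp (f v)) (Real.exp (f x) • f') x := by
  rw [hasGradientAt_iff_hasFDerivAt, map_smul] at *
  exact hf.exp

theorem HasGradientAt.log (hf : HasGradientAt f f' x) (hx : f x ≠ 0) :
    HasGradientAt (fun v => Real.log (f v)) ((f x)⁻¹ • f') x := by
  rw [hasGradientAt_iff_hasFDerivAt, map_smul] at *
  exact hf.log hx

theorem hasGradientAt_neg_half_norm_sq_sub (c x : E) :
    HasGradientAt (fun v => -‖v - c‖ ^ 2 / 2) (c - x) x := by
  have h := (((hasFDerivAt_id x).sub_const c).norm_sq).const_smul (-1 / 2 : ℝ)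
  rw [hasGradientAt_iff_hasFDerivAt]
  refine (h.congr_fderiv ?_).congr_of_eventuallyEq (.of_forall fun v => ?_)
  · ext u
    simp only [id_eq, map_sub, ContinuousLinearMap.comp_id, smul_apply,
      sub_apply, coe_innerSL_apply, nsmul_eq_mul, Nat.cast_ofNat, smul_eq_mul,
      InnerProductSpace.toDual_apply_apply]
    ring
  · simp only [Pi.smul_apply, id, smul_eq_mul]
    ring

theorem hasGradientAt_neg_half_norm_sq_sub_update {ι : Type*} [DecidableEq ι] (w : ι → E) (c : E)
    (i j : ι) :
    HasGradientAt (fun v => -‖c - update w i v j‖ ^ 2 / 2) (if j = i then c - w i else 0)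
      (w i) := by
  split_ifs with h
  · subst h
    simpa only [update_self, norm_sub_rev c] using hasGradientAt_neg_half_norm_sq_sub c (w j)
  · simpa only [update_of_ne h] using hasGradientAt_const (w i) _

theorem HasGradientAt.log_softmax {ι : Type*} {s : Finset ι} {f : ι → E → ℝ}
    {f' : ι → E} {Z : ℝ} (hf : ∀ j ∈ s, HasGradientAt (f j) (f' j) x) (hg : HasGradientAt g g' x)
    (hZ : ∑ j ∈ s, Real.exp (f j x) + Real.exp (g x) = Z) :
    HasGradientAt
      (fun v => Real.log (Real.exp (g v) / (∑ j ∈ s, Real.exp (f j v) + Real.exp (g v))))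
      (g' - ∑ j ∈ s, (Real.exp (f j x) / Z) • f' j - (Real.exp (g x) / Z) • g') x := by
  have hS := (HasGradientAt.sum fun j hj => (hf j hj).exp).add hg.exp
  have hlog := hg.sub (hS.log (by positivity))
  convert hlog.congr_of_eventuallyEq (.of_forall fun v => ?_) using 1
  · simp only [hZ, smul_add, Finset.smul_sum, smul_smul, div_eq_inv_mul]
    abel
  · rw [Real.log_div (Real.exp_ne_zero _) (by positivity), Real.log_exp]

end Gradient

section InfoNCE
variable {ι E : Type*} [Fintype ι] [DecidableEq ι] [NormedAddCommGroup E]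

noncomputable def infoNCEPartition (w w' : ι → E) (k : ι) : ℝ :=
  ∑ j ∈ univ.erase k, Real.exp (-‖w k - w j‖ ^ 2 / 2) + Real.exp (-‖w k - w' k‖ ^ 2 / 2)

noncomputable def infoNCEWeight (w w' : ι → E) (k j : ι) : ℝ :=
  if j = k then Real.exp (-‖w k - w' k‖ ^ 2 / 2) / infoNCEPartition w w' k
  else Real.exp (-‖w k - w j‖ ^ 2 / 2) / infoNCEPartition w w' k

noncomputable def infoNCELogProb (w w' : ι → E) (k : ι) : ℝ :=
  Real.log (Real.exp (-‖w k - w' k‖ ^ 2 / 2) / infoNCEPartition w w' k)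

variable (w w' : ι → E) {i k : ι}

theorem infoNCEWeight_self :
    infoNCEWeight w w' k k = Real.exp (-‖w k - w' k‖ ^ 2 / 2) / infoNCEPartition w w' k :=
  if_pos rfl

theorem infoNCEWeight_of_ne {j : ι} (h : j ≠ k) :
    infoNCEWeight w w' k j = Real.exp (-‖w k - w j‖ ^ 2 / 2) / infoNCEPartition w w' k :=
  if_neg h

theorem sum_erase_infoNCEWeight (k : ι) :
    ∑ j ∈ univ.erase k, infoNCEWeight w w' k j = 1 - infoNCEWeight w w' k k := by
  have hZ : infoNCEPartition w w' k ≠ 0 := by unfold infoNCEPartition; positivity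
  rw [eq_sub_iff_add_eq, sum_congr rfl fun j hj => infoNCEWeight_of_ne w w' (ne_of_mem_erase hj),
    infoNCEWeight_self, ← sum_div, ← add_div]
  exact div_self hZ

theorem infoNCELogProb_update_positive_of_ne (v : E) (h : k ≠ i) :
    infoNCELogProb w (update w' i v) k = infoNCELogProb w w' k := by
  simp only [infoNCELogProb, infoNCEPartition, update_of_ne h]

variable [InnerProductSpace ℝ E] [CompleteSpace E]

theorem hasGradientAt_infoNCELogProb_update_self (i : ι) :
    HasGradientAt (fun v => infoNCELogProb (update w i v) w' i)
      ((w' i - w i) - ∑ j ∈ univ.erase i, infoNCEWeight w w' i j • (w j - w i) -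
        infoNCEWeight w w' i i • (w' i - w i)) (w i) := by
  have h := HasGradientAt.log_softmax (s := univ.erase i) (Z := infoNCEPartition w w' i)
    (fun j _ => hasGradientAt_neg_half_norm_sq_sub (w j) (w i))
    (hasGradientAt_neg_half_norm_sq_sub (w' i) (w i)) rfl
  convert h.congr_of_eventuallyEq (.of_forall fun v => ?_) using 2
  · exact congrArg _ <| sum_congr rfl fun j hj => by
      rw [infoNCEWeight_of_ne w w' (ne_of_mem_erase hj)]
  · rw [infoNCEWeight_self]
  · simp only [infoNCELogProb, infoNCEPartition, update_self]
    congr 3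
    exact sum_congr rfl fun j hj => by rw [update_of_ne (ne_of_mem_erase hj)]

theorem hasGradientAt_infoNCELogProb_update_of_ne (h : k ≠ i) :
    HasGradientAt (fun v => infoNCELogProb (update w i v) w' k)
      (-(infoNCEWeight w w' k i • (w k - w i))) (w i) := by
  have hlog := HasGradientAt.log_softmax (s := univ.erase k) (Z := infoNCEPartition w w' k)
    (fun j _ => hasGradientAt_neg_half_norm_sq_sub_update w (w k) i j)
    (hasGradientAt_const (w i) (-‖w k - w' k‖ ^ 2 / 2)) (by simp only [update_eq_self]; rfl)
  convert hlog.congr_of_eventuallyEq (.of_forall fun v => ?_) using 1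
  · simp only [update_eq_self, smul_ite, smul_zero, sum_ite_eq', mem_erase, ne_eq, h.symm,
      not_false_eq_true, mem_univ, and_self, if_true, infoNCEWeight_of_ne w w' h.symm]
    abel
  · simp only [infoNCELogProb, infoNCEPartition, update_of_ne h]

theorem hasGradientAt_infoNCELogProb_update_positive_self (i : ι) :
    HasGradientAt (fun v => infoNCELogProb w (update w' i v) i)
      ((1 - infoNCEWeight w w' i i) • (w i - w' i)) (w' i) := by
  have hlog := HasGradientAt.log_softmax (s := univ.erase i) (Z := infoNCEPartition w w' i)
    (fun j _ => hasGradientAt_const (w' i) (-‖w i - w j‖ ^ 2 / 2))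
    (hasGradientAt_neg_half_norm_sq_sub (w i) (w' i))
    (by rw [norm_sub_rev]; rfl)
  convert hlog.congr_of_eventuallyEq (.of_forall fun v => ?_) using 1
  · rw [infoNCEWeight_self, norm_sub_rev, sub_smul, one_smul]
    simp only [smul_zero, sum_const_zero, sub_zero]
  · simp only [infoNCELogProb, infoNCEPartition, update_self, norm_sub_rev (w i) v]

end InfoNCE

theorem infoNCE_embedding_gradients_general (N d : ℕ)
    (z z' : Fin N → EuclideanSpace ℝ (Fin d))
    (L : (Fin N → EuclideanSpace ℝ (Fin d)) →
         (Fin N → EuclideanSpace ℝ (Fin d)) → ℝ)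
    (hL : L = fun w w' => -∑ i, Real.log
      (Real.exp (-‖w i - w' i‖ ^ 2 / 2) /
        ((∑ j ∈ univ.erase i, Real.exp (-‖w i - w j‖ ^ 2 / 2)) +
          Real.exp (-‖w i - w' i‖ ^ 2 / 2))))
    (Z : Fin N → ℝ)
    (hZ : ∀ i, Z i = (∑ j ∈ univ.erase i, Real.exp (-‖z i - z j‖ ^ 2 / 2)) +
          Real.exp (-‖z i - z' i‖ ^ 2 / 2))
    (α : Fin N → Fin N → ℝ)
    (hα : ∀ i j, α i j =
      if j = i then Real.exp (-‖z i - z' i‖ ^ 2 / 2) / Z i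
      else Real.exp (-‖z i - z j‖ ^ 2 / 2) / Z i) :
    ∀ i,
      HasGradientAt (fun v => L (update z i v) z')
        ((∑ j ∈ univ.erase i, α i j • (z j - z' i)) +
         (∑ j ∈ univ.erase i, α j i • (z j - z i))) (z i) ∧
      HasGradientAt (fun v => L z (update z' i v))
        (∑ j ∈ univ.erase i, α i j • (z' i - z i)) (z' i) := by
  obtain rfl : Z = infoNCEPartition z z' := funext hZ
  obtain rfl : α = infoNCEWeight z z' := funext₂ hα
  obtain rfl : L = fun w w' => -∑ k, infoNCELogProb w w' k := hL
  intro i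
  have hsplit (f : Fin N → ℝ) : ∑ k, f k = f i + ∑ k ∈ univ.erase i, f k :=
    (add_sum_erase _ f (mem_univ i)).symm
  simp only [hsplit]
  constructor
  · convert ((hasGradientAt_infoNCELogProb_update_self z z' i).add (HasGradientAt.sum
      fun k hk => hasGradientAt_infoNCELogProb_update_of_ne z z' (ne_of_mem_erase hk))).neg using 1
    have hsub : ∀ j, z j - z' i = (z j - z i) - (z' i - z i) := fun j => by abel
    simp only [hsub, smul_sub, sum_sub_distrib, ← sum_smul, sum_erase_infoNCEWeight,
      sum_neg_distrib]
    module
  · have hrest : ∀ k ∈ univ.erase i,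
        HasGradientAt (fun v => infoNCELogProb z (update z' i v) k) 0 (z' i) := fun k hk => by
      simpa only [infoNCELogProb_update_positive_of_ne z z' _ (ne_of_mem_erase hk)]
        using hasGradientAt_const _ _
    convert ((hasGradientAt_infoNCELogProb_update_positive_self z z' i).add
      (HasGradientAt.sum hrest)).neg using 1
    rw [← sum_smul, sum_erase_infoNCEWeight, sum_const_zero]
    module

/-- **Gradients of the InfoNCE loss with respect to the embedding vectors.**
For `N ≥ 2` and embeddings `z_i, z_i' ∈ ℝ^d`, with
`L = −∑ i log (exp(−‖z_i−z_i'‖²/2) / Z_i)`,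
`Z_i = ∑_{j≠i} exp(−‖z_i−z_j‖²/2) + exp(−‖z_i−z_i'‖²/2)`,
`α_{ij} = exp(−‖z_i−z_j‖²/2)/Z_i` for `j ≠ i` and `α_{ii} = exp(−‖z_i−z_i'‖²/2)/Z_i`,
the partial gradients are
`∂L/∂z_i = ∑_{j≠i} α_{ij}(z_j − z_i') + ∑_{j≠i} α_{ji}(z_j − z_i)` and
`∂L/∂z_i' = ∑_{j≠i} α_{ij}(z_i' − z_i)`. -/
theorem infoNCE_embedding_gradients (N d : ℕ) (hN : 2 ≤ N)
    (z z' : Fin N → EuclideanSpace ℝ (Fin d))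
    (L : (Fin N → EuclideanSpace ℝ (Fin d)) →
         (Fin N → EuclideanSpace ℝ (Fin d)) → ℝ)
    (hL : L = fun w w' => -∑ i, Real.log
      (Real.exp (-‖w i - w' i‖ ^ 2 / 2) /
        ((∑ j ∈ univ.erase i, Real.exp (-‖w i - w j‖ ^ 2 / 2)) +
          Real.exp (-‖w i - w' i‖ ^ 2 / 2))))
    (Z : Fin N → ℝ)
    (hZ : ∀ i, Z i = (∑ j ∈ univ.erase i, Real.exp (-‖z i - z j‖ ^ 2 / 2)) +
          Real.exp (-‖z i - z' i‖ ^ 2 / 2))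
    (α : Fin N → Fin N → ℝ)
    (hα : ∀ i j, α i j =
      if j = i then Real.exp (-‖z i - z' i‖ ^ 2 / 2) / Z i
      else Real.exp (-‖z i - z j‖ ^ 2 / 2) / Z i) :
    ∀ i,
      HasGradientAt (fun v => L (update z i v) z')
        ((∑ j ∈ univ.erase i, α i j • (z j - z' i)) +
         (∑ j ∈ univ.erase i, α j i • (z j - z i))) (z i) ∧
      HasGradientAt (fun v => L z (update z' i v))
        (∑ j ∈ univ.erase i, α i j • (z' i - z i)) (z' i) :=
  infoNCE_embedding_gradients_general N d z z' L hL Z hZ α hα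
end

section
/- Let W₁, W₂ : ℝ → Matrix (Fin n) (Fin n) ℝ be differentiable and let G : ℝ → Matrix (Fin n) (Fin n) ℝ be a function such that W₁'(t) = −W₂(t)ᵀ * G(t) and W₂'(t) = −G(t) * W₁(t)ᵀ for all t ∈ ℝ. Then the matrix W₁(t) W₁(t)ᵀ − W₂(t)ᵀ W₂(t) is constant in t; i.e., for all t, W₁(t)W₁(t)ᵀ − W₂(t)ᵀW₂(t) = W₁(0)W₁(0)ᵀ − W₂(0)ᵀW₂(0). -/
/-!
Differentiating entrywise, `(W₁ W₁ᵀ)' = -W₂ᵀ G W₁ᵀ - W₁ Gᵀ W₂` and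
`(W₂ᵀ W₂)' = -W₁ Gᵀ W₂ - W₂ᵀ G W₁ᵀ` coincide, so `W₁ W₁ᵀ - W₂ᵀ W₂` has zero derivative
and is constant by the mean value theorem.
-/

open Matrix

namespace Matrix

variable {l m n : Type*}

section NontriviallyNormedField

variable {𝕜 : Type*} [NontriviallyNormedField 𝕜]

def HasEntrywiseDerivAt {F : Type*} [NormedAddCommGroup F] [NormedSpace 𝕜 F]
    (W : 𝕜 → Matrix m n F) (W' : Matrix m n F) (t : 𝕜) : Prop :=
  ∀ i j, HasDerivAt (fun s => W s i j) (W' i j) t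

namespace HasEntrywiseDerivAt

section AddGroup

variable {F : Type*} [NormedAddCommGroup F] [NormedSpace 𝕜 F]
  {V W : 𝕜 → Matrix m n F} {V' W' : Matrix m n F} {t : 𝕜}

theorem transpose (hW : HasEntrywiseDerivAt W W' t) :
    HasEntrywiseDerivAt (fun s => (W s)ᵀ) W'ᵀ t :=
  fun i j => hW j i

theorem sub (hV : HasEntrywiseDerivAt V V' t) (hW : HasEntrywiseDerivAt W W' t) :
    HasEntrywiseDerivAt (fun s => V s - W s) (V' - W') t :=
  fun i j => (hV i j).sub (hW i j)

end AddGroup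

theorem mul {𝔸 : Type*} [NormedRing 𝔸] [NormedAlgebra 𝕜 𝔸] [Fintype m]
    {A : 𝕜 → Matrix l m 𝔸} {B : 𝕜 → Matrix m n 𝔸} {A' : Matrix l m 𝔸} {B' : Matrix m n 𝔸}
    {t : 𝕜} (hA : HasEntrywiseDerivAt A A' t) (hB : HasEntrywiseDerivAt B B' t) :
    HasEntrywiseDerivAt (fun s => A s * B s) (A' * B t + A t * B') t := by
  intro i j
  simp only [add_apply, mul_apply, ← Finset.sum_add_distrib]
  exact HasDerivAt.fun_sum fun k _ => (hA i k).mul (hB k j)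

end HasEntrywiseDerivAt

end NontriviallyNormedField

theorem eq_of_hasEntrywiseDerivAt_zero {𝕜 F : Type*} [RCLike 𝕜] [NormedAddCommGroup F]
    [NormedSpace 𝕜 F] {W : 𝕜 → Matrix m n F} (hW : ∀ t, HasEntrywiseDerivAt W 0 t) (x y : 𝕜) :
    W x = W y := by
  ext i j
  exact is_const_of_deriv_eq_zero (fun t => (hW t i j).differentiableAt)
    (fun t => (hW t i j).deriv) x y

end Matrix

/-- **Conservation law of the two-layer contrastive gradient flow.**
If `W₁, W₂ : ℝ → Matrix (Fin n) (Fin n) ℝ` are differentiable (entrywise) with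
`Ẇ₁ = −W₂ᵀ G` and `Ẇ₂ = −G W₁ᵀ`, then `W₁ W₁ᵀ − W₂ᵀ W₂` is constant in time. -/
theorem two_layer_conservation (n : ℕ)
    (W₁ W₂ G : ℝ → Matrix (Fin n) (Fin n) ℝ)
    (hW₁ : ∀ t i j, HasDerivAt (fun s => W₁ s i j) ((-(W₂ t)ᵀ * G t) i j) t)
    (hW₂ : ∀ t i j, HasDerivAt (fun s => W₂ s i j) ((-(G t) * (W₁ t)ᵀ) i j) t) :
    ∀ t, W₁ t * (W₁ t)ᵀ - (W₂ t)ᵀ * W₂ t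
        = W₁ 0 * (W₁ 0)ᵀ - (W₂ 0)ᵀ * W₂ 0 := by
  refine fun t => eq_of_hasEntrywiseDerivAt_zero
    (W := fun s => W₁ s * (W₁ s)ᵀ - (W₂ s)ᵀ * W₂ s) (fun s => ?_) t 0
  have h₁ : HasEntrywiseDerivAt W₁ (-(W₂ s)ᵀ * G s) s := hW₁ s
  have h₂ : HasEntrywiseDerivAt W₂ (-G s * (W₁ s)ᵀ) s := hW₂ s
  have hQ := (h₁.mul h₁.transpose).sub (h₂.transpose.mul h₂)
  have hQ_deriv : -(W₂ s)ᵀ * G s * (W₁ s)ᵀ + W₁ s * (-(W₂ s)ᵀ * G s)ᵀ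
      - ((-G s * (W₁ s)ᵀ)ᵀ * W₂ s + (W₂ s)ᵀ * (-G s * (W₁ s)ᵀ)) = 0 := by
    simp only [transpose_mul, transpose_neg, transpose_transpose, Matrix.neg_mul,
      Matrix.mul_neg, Matrix.mul_assoc]
    abel
  rwa [hQ_deriv] at hQ
end

section
/- Let W₁, W₂ : ℝ → Matrix (Fin n) (Fin n) ℝ be differentiable and X : ℝ → Matrix (Fin n) (Fin n) ℝ, and suppose W₁'(t) = −W₂(t)ᵀ G(t) and W₂'(t) = −G(t) W₁(t)ᵀ with G(t) := −W₂(t) W₁(t) X(t) for all t. Then d/dt tr(W₁(t) W₁(t)ᵀ) = 2 · tr( W₂(t) W₁(t) X(t) W₁(t)ᵀ W₂(t)ᵀ ). Moreover, if at some time t the matrix X(t) is symmetric positive definite and W₂(t)W₁(t) ≠ 0, then this derivative is strictly positive, so the squared Frobenius norm ‖W₁(t)‖_F² = tr(W₁(t)W₁(t)ᵀ) is strictly increasing at t. -/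
/-! With `M = W₂ W₁`, the flow gives `W₁' = W₂ᵀ M X`, so by the product rule and cyclicity of the
trace `d/dt tr(W₁ W₁ᵀ) = 2 tr(W₂ᵀ M X W₁ᵀ) = 2 tr(M X Mᵀ)`. The diagonal entries of `M X Mᵀ` are
the values of the quadratic form of `X` on the rows of `M`, so for positive definite `X` the trace
is positive as soon as some row of `M` is nonzero. -/

open Matrix

namespace Matrix

variable {m n : Type*} [Fintype m] [Fintype n]

theorem trace_mul_mul_conjTranspose_pos {R : Type*} [Ring R] [PartialOrder R] [StarRing R]
    [IsOrderedAddMonoid R] {C : Matrix n n R} (hC : C.PosDef) {M : Matrix m n R} (hM : M ≠ 0) :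
    0 < (M * C * Mᴴ).trace := by
  have hdiag (i : m) : (M * C * Mᴴ).diag i = star (star (M i)) ⬝ᵥ C *ᵥ star (M i) := by
    rw [star_star, diag_apply, mul_apply', dotProduct_mulVec]
    rfl
  obtain ⟨i, hi⟩ : ∃ i, M i ≠ 0 := by
    by_contra! h
    exact hM (funext h)
  refine Finset.sum_pos' (fun j _ => ?_) ⟨i, Finset.mem_univ i, ?_⟩
  · exact (hdiag j).symm ▸ hC.posSemidef.dotProduct_mulVec_nonneg _
  · exact (hdiag i).symm ▸ hC.dotProduct_mulVec_pos (star_ne_zero.mpr hi)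

theorem hasDerivAt_trace_mul_transpose_self {𝕜 : Type*} [NontriviallyNormedField 𝕜]
    {W : 𝕜 → Matrix m n 𝕜} {W' : Matrix m n 𝕜} {t : 𝕜}
    (hW : ∀ i j, HasDerivAt (fun s => W s i j) (W' i j) t) :
    HasDerivAt (fun s => (W s * (W s)ᵀ).trace) (2 * (W' * (W t)ᵀ).trace) t := by
  have hsum : (fun s => (W s * (W s)ᵀ).trace) = fun s => ∑ i, ∑ j, W s i j * W s i j := by
    funext s
    simp [trace, mul_apply]
  have hderiv : 2 * (W' * (W t)ᵀ).trace = ∑ i, ∑ j, (W' i j * W t i j + W t i j * W' i j) := by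
    simp only [trace, diag_apply, mul_apply, transpose_apply, Finset.mul_sum]
    exact Finset.sum_congr rfl fun i _ => Finset.sum_congr rfl fun j _ => by ring
  rw [hsum, hderiv]
  exact HasDerivAt.fun_sum fun i _ => HasDerivAt.fun_sum fun j _ => (hW i j).mul (hW i j)

end Matrix

theorem frobenius_norm_growth_general (n : ℕ)
    (W₁ W₂ X G : ℝ → Matrix (Fin n) (Fin n) ℝ)
    (hG : ∀ t, G t = -(W₂ t * W₁ t * X t))
    (hW₁ : ∀ t i j, HasDerivAt (fun s => W₁ s i j) ((-(W₂ t)ᵀ * G t) i j) t) :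
    ∀ t,
      HasDerivAt (fun s => Matrix.trace (W₁ s * (W₁ s)ᵀ))
        (2 * Matrix.trace (W₂ t * W₁ t * X t * (W₁ t)ᵀ * (W₂ t)ᵀ)) t ∧
      ((X t).PosDef → W₂ t * W₁ t ≠ 0 →
        0 < 2 * Matrix.trace (W₂ t * W₁ t * X t * (W₁ t)ᵀ * (W₂ t)ᵀ)) := by
  intro t
  have htrace : (-(W₂ t)ᵀ * G t * (W₁ t)ᵀ).trace
      = (W₂ t * W₁ t * X t * (W₁ t)ᵀ * (W₂ t)ᵀ).trace := by
    rw [hG, neg_mul_neg, Matrix.mul_assoc, trace_mul_comm]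
  have hconj : W₂ t * W₁ t * X t * (W₁ t)ᵀ * (W₂ t)ᵀ
      = W₂ t * W₁ t * X t * (W₂ t * W₁ t)ᴴ := by
    rw [conjTranspose_eq_transpose_of_trivial, transpose_mul,
      Matrix.mul_assoc (W₂ t * W₁ t * X t)]
  refine ⟨htrace ▸ hasDerivAt_trace_mul_transpose_self (hW₁ t), fun hX hM => ?_⟩
  rw [hconj]
  exact mul_pos two_pos (trace_mul_mul_conjTranspose_pos hX hM)

/-- **Frobenius norm growth along the two-layer contrastive gradient flow.**
If `Ẇ₁ = −W₂ᵀ G` and `Ẇ₂ = −G W₁ᵀ` with `G = −W₂ W₁ X`, then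
`d/dt tr(W₁ W₁ᵀ) = 2 tr(W₂ W₁ X W₁ᵀ W₂ᵀ)`; moreover, if at some time `t` the
matrix `X t` is symmetric positive definite and `W₂ t * W₁ t ≠ 0`, this
derivative is strictly positive, so `‖W₁ t‖_F² = tr(W₁ t (W₁ t)ᵀ)` is strictly
increasing at `t`. -/
theorem frobenius_norm_growth (n : ℕ)
    (W₁ W₂ X G : ℝ → Matrix (Fin n) (Fin n) ℝ)
    (hG : ∀ t, G t = -(W₂ t * W₁ t * X t))
    (hW₁ : ∀ t i j, HasDerivAt (fun s => W₁ s i j) ((-(W₂ t)ᵀ * G t) i j) t)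
    (hW₂ : ∀ t i j, HasDerivAt (fun s => W₂ s i j) ((-(G t) * (W₁ t)ᵀ) i j) t) :
    ∀ t,
      HasDerivAt (fun s => Matrix.trace (W₁ s * (W₁ s)ᵀ))
        (2 * Matrix.trace (W₂ t * W₁ t * X t * (W₁ t)ᵀ * (W₂ t)ᵀ)) t ∧
      ((X t).PosDef → W₂ t * W₁ t ≠ 0 →
        0 < 2 * Matrix.trace (W₂ t * W₁ t * X t * (W₁ t)ᵀ * (W₂ t)ᵀ)) :=
  frobenius_norm_growth_general n W₁ W₂ X G hG hW₁
end

section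
/- Let W₁ = U₁S₁V₁ᵀ and W₂ = U₂S₂V₂ᵀ be differentiable singular value decomposition paths of n×n real matrices (U_l, V_l orthogonal-valued, S_l diagonal-valued, all differentiable in t), evolving by Ẇ₁ = −W₂ᵀG and Ẇ₂ = −GW₁ᵀ for some matrix function G(t), and suppose the singular vector dynamics satisfy U̇₁ = U₁(H₁ ⊙ (U₁ᵀẆ₁V₁S₁ + S₁V₁ᵀẆ₁ᵀU₁)) and V̇₂ = V₂(H₂ ⊙ (V₂ᵀẆ₂ᵀU₂S₂ + S₂U₂ᵀẆ₂V₂)), where H_l has entries (H_l)_{kk'} = 1/((σ_l^k)² − (σ_l^{k'})²) for k ≠ k' and 0 on the diagonal, σ_l^k being the diagonal entries of S_l. Then the alignment matrix A := V₂ᵀU₁ evolves by Ȧ = −A ( H₁ ⊙ (AᵀF + FᵀA) ) + ( H₂ ⊙ (AFᵀ + FAᵀ) ) A, where F := S₂ U₂ᵀ G V₁ S₁. -/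
/-!
Since `Ȧ = V̇₂ᵀ U₁ + V₂ᵀ U̇₁`, it suffices to rewrite both forcing terms through `A` and `F`.
Substituting the SVD of the other layer gives `U₁ᵀ Ẇ₁ V₁ S₁ = -AᵀF` and `V₂ᵀ Ẇ₂ᵀ U₂ S₂ = -AFᵀ`,
and the remaining halves are their transposes because diagonal matrices are symmetric. The sign
in front of the `H₂`-term flips when `V̇₂` is transposed, since `H₂` is antisymmetric while
`AFᵀ + FAᵀ` is symmetric.
-/

open Matrix

namespace Matrix

section Hadamard

variable {m n α : Type*} [NonUnitalNonAssocRing α]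

theorem hadamard_neg (P Q : Matrix m n α) : P ⊙ (-Q) = -(P ⊙ Q) := by
  ext i j
  exact mul_neg _ _

theorem neg_hadamard (P Q : Matrix m n α) : (-P) ⊙ Q = -(P ⊙ Q) := by
  ext i j
  exact neg_mul _ _

end Hadamard

theorem transpose_of_one_div_sub {ι K : Type*} [DecidableEq ι] [DivisionRing K] (d : ι → K) :
    (of fun k k' => if k = k' then 0 else 1 / (d k - d k'))ᵀ =
      -of fun k k' => if k = k' then 0 else 1 / (d k - d k') := by
  ext k k'
  rcases eq_or_ne k k' with rfl | h
  · simp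
  · simp only [transpose_apply, neg_apply, of_apply, if_neg h, if_neg h.symm]
    rw [← neg_sub, one_div_neg_eq_neg_one_div]

theorem hasDerivAt_mul_apply {𝕜 : Type*} [NontriviallyNormedField 𝕜] {l m n : Type*}
    [Fintype m] {P : 𝕜 → Matrix l m 𝕜} {Q : 𝕜 → Matrix m n 𝕜} {P' : Matrix l m 𝕜}
    {Q' : Matrix m n 𝕜} {t : 𝕜} (hP : ∀ i j, HasDerivAt (fun s => P s i j) (P' i j) t)
    (hQ : ∀ j k, HasDerivAt (fun s => Q s j k) (Q' j k) t) (i : l) (k : n) :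
    HasDerivAt (fun s => (P s * Q s) i k) ((P' * Q t + P t * Q') i k) t := by
  simp only [mul_apply, add_apply, ← Finset.sum_add_distrib]
  exact HasDerivAt.fun_sum fun j _ => (hP i j).mul (hQ j k)

end Matrix

section AlignmentAlgebra

variable {n R : Type*} [Fintype n] [CommRing R]
  {U₁ S₁ V₁ U₂ S₂ V₂ G H₁ H₂ X₁ X₂ : Matrix n n R}

theorem first_layer_forcing_eq (hS₁ : S₁.IsSymm) (hS₂ : S₂.IsSymm) :
    U₁ᵀ * (-(U₂ * S₂ * V₂ᵀ)ᵀ * G) * V₁ * S₁ + S₁ * V₁ᵀ * (-(U₂ * S₂ * V₂ᵀ)ᵀ * G)ᵀ * U₁ =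
      -((V₂ᵀ * U₁)ᵀ * (S₂ * U₂ᵀ * G * V₁ * S₁) + (S₂ * U₂ᵀ * G * V₁ * S₁)ᵀ * (V₂ᵀ * U₁)) := by
  simp only [transpose_mul, transpose_neg, transpose_transpose, hS₁.eq, hS₂.eq, Matrix.neg_mul,
    Matrix.mul_neg, neg_add, Matrix.mul_assoc]

theorem second_layer_forcing_eq (hS₁ : S₁.IsSymm) (hS₂ : S₂.IsSymm) :
    V₂ᵀ * (-G * (U₁ * S₁ * V₁ᵀ)ᵀ)ᵀ * U₂ * S₂ + S₂ * U₂ᵀ * (-G * (U₁ * S₁ * V₁ᵀ)ᵀ) * V₂ =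
      -(V₂ᵀ * U₁ * (S₂ * U₂ᵀ * G * V₁ * S₁)ᵀ + S₂ * U₂ᵀ * G * V₁ * S₁ * (V₂ᵀ * U₁)ᵀ) := by
  simp only [transpose_mul, transpose_neg, transpose_transpose, hS₁.eq, hS₂.eq, Matrix.neg_mul,
    Matrix.mul_neg, neg_add, Matrix.mul_assoc]

theorem transpose_mul_add_transpose_mul_eq (hH₂ : H₂ᵀ = -H₂) (hX₂ : X₂.IsSymm) :
    (-(V₂ * (H₂ ⊙ X₂)))ᵀ * U₁ + V₂ᵀ * -(U₁ * (H₁ ⊙ X₁)) =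
      -(V₂ᵀ * U₁) * (H₁ ⊙ X₁) + (H₂ ⊙ X₂) * (V₂ᵀ * U₁) := by
  rw [transpose_neg, transpose_mul, transpose_hadamard, hH₂, hX₂.eq, neg_hadamard]
  simp only [Matrix.neg_mul, Matrix.mul_neg, neg_neg, Matrix.mul_assoc, add_comm]

end AlignmentAlgebra

theorem alignment_matrix_dynamics_general (n : ℕ)
    (W₁ U₁ S₁ V₁ W₂ U₂ S₂ V₂ U₁' V₂' G : ℝ → Matrix (Fin n) (Fin n) ℝ)
    (hSVD₁ : ∀ t, W₁ t = U₁ t * S₁ t * (V₁ t)ᵀ)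
    (hSVD₂ : ∀ t, W₂ t = U₂ t * S₂ t * (V₂ t)ᵀ)
    (hS₁diag : ∀ t k k', k ≠ k' → S₁ t k k' = 0)
    (hS₂diag : ∀ t k k', k ≠ k' → S₂ t k k' = 0)
    (H₁ H₂ : ℝ → Matrix (Fin n) (Fin n) ℝ)
    (hH₂ : ∀ t, H₂ t = Matrix.of fun k k' =>
      if k = k' then 0 else 1 / ((S₂ t k k) ^ 2 - (S₂ t k' k') ^ 2))
    -- entrywise differentiability of the singular-vector paths
    (hU₁ : ∀ t i j, HasDerivAt (fun s => U₁ s i j) (U₁' t i j) t)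
    (hV₂ : ∀ t i j, HasDerivAt (fun s => V₂ s i j) (V₂' t i j) t)
    -- singular-vector dynamics, with `Ẇ₁ = −W₂ᵀ G` and `Ẇ₂ = −G W₁ᵀ`
    (hU₁dyn : ∀ t, U₁' t = U₁ t *
      (H₁ t ⊙ ((U₁ t)ᵀ * (-(W₂ t)ᵀ * G t) * V₁ t * S₁ t +
               S₁ t * (V₁ t)ᵀ * (-(W₂ t)ᵀ * G t)ᵀ * U₁ t)))
    (hV₂dyn : ∀ t, V₂' t = V₂ t *
      (H₂ t ⊙ ((V₂ t)ᵀ * (-(G t) * (W₁ t)ᵀ)ᵀ * U₂ t * S₂ t +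
               S₂ t * (U₂ t)ᵀ * (-(G t) * (W₁ t)ᵀ) * V₂ t)))
    (A F : ℝ → Matrix (Fin n) (Fin n) ℝ)
    (hA : ∀ t, A t = (V₂ t)ᵀ * U₁ t)
    (hF : ∀ t, F t = S₂ t * (U₂ t)ᵀ * G t * V₁ t * S₁ t) :
    ∀ t i j, HasDerivAt (fun s => A s i j)
      ((-(A t) * (H₁ t ⊙ ((A t)ᵀ * F t + (F t)ᵀ * A t)) +
        (H₂ t ⊙ (A t * (F t)ᵀ + F t * (A t)ᵀ)) * A t) i j) t := by
  intro t i j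
  have hS₁ : (S₁ t).IsSymm := IsDiag.isSymm fun k k' => hS₁diag t k k'
  have hS₂ : (S₂ t).IsSymm := IsDiag.isSymm fun k k' => hS₂diag t k k'
  have hH₂anti : (H₂ t)ᵀ = -H₂ t := by
    rw [hH₂ t]
    exact transpose_of_one_div_sub fun k => S₂ t k k ^ 2
  have hX₂ : (A t * (F t)ᵀ + F t * (A t)ᵀ).IsSymm := by
    simpa only [transpose_mul, transpose_transpose] using isSymm_add_transpose_self (A t * (F t)ᵀ)
  have hU₁' : U₁' t = -(U₁ t * (H₁ t ⊙ ((A t)ᵀ * F t + (F t)ᵀ * A t))) := by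
    rw [hU₁dyn, hSVD₂, first_layer_forcing_eq hS₁ hS₂, hadamard_neg, Matrix.mul_neg, hA, hF]
  have hV₂' : V₂' t = -(V₂ t * (H₂ t ⊙ (A t * (F t)ᵀ + F t * (A t)ᵀ))) := by
    rw [hV₂dyn, hSVD₁, second_layer_forcing_eq hS₁ hS₂, hadamard_neg, Matrix.mul_neg, hA, hF]
  have hprod := hasDerivAt_mul_apply (P := fun s => (V₂ s)ᵀ) (P' := (V₂' t)ᵀ)
    (fun k l => hV₂ t l k) (fun k l => hU₁ t k l) i j
  rw [hU₁', hV₂', transpose_mul_add_transpose_mul_eq hH₂anti hX₂] at hprod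
  simpa only [hA] using hprod

/-- **Lemma (alignment matrix dynamics).**
Let `W₁ = U₁ S₁ V₁ᵀ` and `W₂ = U₂ S₂ V₂ᵀ` be differentiable SVD paths evolving
by `Ẇ₁ = −W₂ᵀ G`, `Ẇ₂ = −G W₁ᵀ`, whose singular-vector dynamics satisfy
`U̇₁ = U₁ (H₁ ⊙ (U₁ᵀ Ẇ₁ V₁ S₁ + S₁ V₁ᵀ Ẇ₁ᵀ U₁))` and
`V̇₂ = V₂ (H₂ ⊙ (V₂ᵀ Ẇ₂ᵀ U₂ S₂ + S₂ U₂ᵀ Ẇ₂ V₂))`, where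
`(H_l)_{kk'} = 1/((σ_l^k)² − (σ_l^{k'})²)` off the diagonal and `0` on it.
Then the alignment matrix `A = V₂ᵀ U₁` evolves by
`Ȧ = −A (H₁ ⊙ (Aᵀ F + Fᵀ A)) + (H₂ ⊙ (A Fᵀ + F Aᵀ)) A` with
`F = S₂ U₂ᵀ G V₁ S₁`. -/
theorem alignment_matrix_dynamics (n : ℕ)
    (W₁ U₁ S₁ V₁ W₂ U₂ S₂ V₂ U₁' V₂' G : ℝ → Matrix (Fin n) (Fin n) ℝ)
    (hSVD₁ : ∀ t, W₁ t = U₁ t * S₁ t * (V₁ t)ᵀ)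
    (hSVD₂ : ∀ t, W₂ t = U₂ t * S₂ t * (V₂ t)ᵀ)
    (hU₁orth : ∀ t, (U₁ t)ᵀ * U₁ t = 1) (hV₁orth : ∀ t, (V₁ t)ᵀ * V₁ t = 1)
    (hU₂orth : ∀ t, (U₂ t)ᵀ * U₂ t = 1) (hV₂orth : ∀ t, (V₂ t)ᵀ * V₂ t = 1)
    (hS₁diag : ∀ t k k', k ≠ k' → S₁ t k k' = 0)
    (hS₂diag : ∀ t k k', k ≠ k' → S₂ t k k' = 0)
    (H₁ H₂ : ℝ → Matrix (Fin n) (Fin n) ℝ)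
    (hH₁ : ∀ t, H₁ t = Matrix.of fun k k' =>
      if k = k' then 0 else 1 / ((S₁ t k k) ^ 2 - (S₁ t k' k') ^ 2))
    (hH₂ : ∀ t, H₂ t = Matrix.of fun k k' =>
      if k = k' then 0 else 1 / ((S₂ t k k) ^ 2 - (S₂ t k' k') ^ 2))
    -- entrywise differentiability of the singular-vector paths
    (hU₁ : ∀ t i j, HasDerivAt (fun s => U₁ s i j) (U₁' t i j) t)
    (hV₂ : ∀ t i j, HasDerivAt (fun s => V₂ s i j) (V₂' t i j) t)
    -- singular-vector dynamics, with `Ẇ₁ = −W₂ᵀ G` and `Ẇ₂ = −G W₁ᵀ`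
    (hU₁dyn : ∀ t, U₁' t = U₁ t *
      (H₁ t ⊙ ((U₁ t)ᵀ * (-(W₂ t)ᵀ * G t) * V₁ t * S₁ t +
               S₁ t * (V₁ t)ᵀ * (-(W₂ t)ᵀ * G t)ᵀ * U₁ t)))
    (hV₂dyn : ∀ t, V₂' t = V₂ t *
      (H₂ t ⊙ ((V₂ t)ᵀ * (-(G t) * (W₁ t)ᵀ)ᵀ * U₂ t * S₂ t +
               S₂ t * (U₂ t)ᵀ * (-(G t) * (W₁ t)ᵀ) * V₂ t)))
    (A F : ℝ → Matrix (Fin n) (Fin n) ℝ)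
    (hA : ∀ t, A t = (V₂ t)ᵀ * U₁ t)
    (hF : ∀ t, F t = S₂ t * (U₂ t)ᵀ * G t * V₁ t * S₁ t) :
    ∀ t i j, HasDerivAt (fun s => A s i j)
      ((-(A t) * (H₁ t ⊙ ((A t)ᵀ * F t + (F t)ᵀ * A t)) +
        (H₂ t ⊙ (A t * (F t)ᵀ + F t * (A t)ᵀ)) * A t) i j) t :=
  alignment_matrix_dynamics_general n W₁ U₁ S₁ V₁ W₂ U₂ S₂ V₂ U₁' V₂' G hSVD₁ hSVD₂ hS₁diag hS₂diag
    H₁ H₂ hH₂ hU₁ hV₂ hU₁dyn hV₂dyn A F hA hF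
end

section
/- Let W₁ = U₁S₁V₁ᵀ and W₂ = U₂S₂U₁ᵀ be n×n real matrices given in singular value decomposition form with the alignment condition V₂ = U₁ (U₁, V₁, U₂ orthogonal, S₁ = diag(σ₁^k), S₂ = diag(σ₂^k)), let X be an n×n real matrix, and set G := −W₂W₁X. Suppose the singular values evolve by σ̇₁^k = (u₁^k)ᵀẆ₁v₁^k with Ẇ₁ = −W₂ᵀG, and σ̇₂^k = (u₂^k)ᵀẆ₂v₂^k with Ẇ₂ = −GW₁ᵀ, where u_l^k, v_l^k denote the k-th columns of U_l, V_l. Then for every k: σ̇₁^k = σ₁^k (σ₂^k)² ( (v₁^k)ᵀ X v₁^k ) and σ̇₂^k = σ₂^k (σ₁^k)² ( (v₁^k)ᵀ X v₁^k ). In particular, if X is positive semidefinite, both derivatives have the same sign as σ₁^k σ₂^k · σ₂^k resp. σ₁^k, and the factor (v₁^k)ᵀXv₁^k is nonnegative. -/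
open Matrix

/-!
Conjugating the gradient-flow velocities by the singular bases, the alignment `V₂ = U₁` makes every
inner factor `U₁ᵀ U₁` collapse, so that `U₁ᵀ Ẇ₁ V₁ = S₂ᵀ S₂ S₁ (V₁ᵀ X V₁)` and
`U₂ᵀ Ẇ₂ U₁ = S₂ S₁ (V₁ᵀ X V₁) S₁ᵀ`. With diagonal `S₁, S₂` the `k`-th diagonal entries of these
are the claimed formulas for `σ̇₁^k` and `σ̇₂^k`.
-/

theorem Matrix.col_dotProduct_mulVec_col {ι R : Type*} [Fintype ι] [Semiring R]
    (A M B : Matrix ι ι R) (k : ι) :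
    (fun a => A a k) ⬝ᵥ (M *ᵥ fun a => B a k) = (Aᵀ * M * B) k k := by
  rw [dotProduct_mulVec]
  rfl

section AlignedFactorization

variable {ι R : Type*} [Fintype ι] [DecidableEq ι] [CommSemiring R]
  {U₁ S₁ V₁ U₂ S₂ : Matrix ι ι R} (X : Matrix ι ι R)

theorem aligned_flow₁_in_singular_bases (hU₁ : U₁ᵀ * U₁ = 1) (hU₂ : U₂ᵀ * U₂ = 1) :
    U₁ᵀ * ((U₂ * S₂ * U₁ᵀ)ᵀ * (U₂ * S₂ * U₁ᵀ * (U₁ * S₁ * V₁ᵀ) * X)) * V₁ =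
      S₂ᵀ * (S₂ * (S₁ * (V₁ᵀ * X * V₁))) := by
  simp only [transpose_mul, transpose_transpose, Matrix.mul_assoc]
  rw [← Matrix.mul_assoc U₂ᵀ U₂, hU₂, Matrix.one_mul,
    ← Matrix.mul_assoc U₁ᵀ U₁, hU₁, Matrix.one_mul,
    ← Matrix.mul_assoc U₁ᵀ U₁, hU₁, Matrix.one_mul]

theorem aligned_flow₂_in_singular_bases (hU₁ : U₁ᵀ * U₁ = 1) (hU₂ : U₂ᵀ * U₂ = 1) :
    U₂ᵀ * (U₂ * S₂ * U₁ᵀ * (U₁ * S₁ * V₁ᵀ) * X * (U₁ * S₁ * V₁ᵀ)ᵀ) * U₁ =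
      S₂ * (S₁ * (V₁ᵀ * X * V₁ * S₁ᵀ)) := by
  simp only [transpose_mul, transpose_transpose, Matrix.mul_assoc]
  rw [← Matrix.mul_assoc U₂ᵀ U₂, hU₂, Matrix.one_mul,
    ← Matrix.mul_assoc U₁ᵀ U₁, hU₁, Matrix.one_mul, Matrix.mul_one]

end AlignedFactorization

theorem aligned_singular_value_dynamics_general (n : ℕ)
    (W₁ U₁ S₁ V₁ W₂ U₂ S₂ X G : Matrix (Fin n) (Fin n) ℝ)
    (hSVD₁ : W₁ = U₁ * S₁ * V₁ᵀ) (hSVD₂ : W₂ = U₂ * S₂ * U₁ᵀ)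
    (hU₁orth : U₁ᵀ * U₁ = 1) (hU₂orth : U₂ᵀ * U₂ = 1)
    (σ₁ σ₂ : Fin n → ℝ)
    (hS₁ : S₁ = diagonal σ₁) (hS₂ : S₂ = diagonal σ₂)
    (hG : G = -(W₂ * W₁ * X))
    (dσ₁ dσ₂ : Fin n → ℝ)
    (hdσ₁ : ∀ k, dσ₁ k =
      (fun a => U₁ a k) ⬝ᵥ ((-(W₂ᵀ) * G) *ᵥ fun a => V₁ a k))
    (hdσ₂ : ∀ k, dσ₂ k =
      (fun a => U₂ a k) ⬝ᵥ ((-G * W₁ᵀ) *ᵥ fun a => U₁ a k)) :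
    (∀ k, dσ₁ k = σ₁ k * (σ₂ k) ^ 2 *
        ((fun a => V₁ a k) ⬝ᵥ (X *ᵥ fun a => V₁ a k))) ∧
    (∀ k, dσ₂ k = σ₂ k * (σ₁ k) ^ 2 *
        ((fun a => V₁ a k) ⬝ᵥ (X *ᵥ fun a => V₁ a k))) ∧
    (X.PosSemidef → ∀ k, 0 ≤ (fun a => V₁ a k) ⬝ᵥ (X *ᵥ fun a => V₁ a k)) := by
  subst hSVD₁ hSVD₂ hS₁ hS₂ hG
  refine ⟨fun k => ?_, fun k => ?_, fun hX k => ?_⟩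
  · rw [hdσ₁, col_dotProduct_mulVec_col, neg_mul_neg,
      aligned_flow₁_in_singular_bases X hU₁orth hU₂orth, col_dotProduct_mulVec_col]
    simp only [diagonal_transpose, diagonal_mul]
    ring
  · rw [hdσ₂, col_dotProduct_mulVec_col, neg_neg,
      aligned_flow₂_in_singular_bases X hU₁orth hU₂orth, col_dotProduct_mulVec_col]
    simp only [diagonal_transpose, diagonal_mul, mul_diagonal]
    ring
  · simpa using hX.dotProduct_mulVec_nonneg (fun a => V₁ a k)

/-- **Theorem (aligned singular value dynamics).**
Let `W₁ = U₁ S₁ V₁ᵀ` and `W₂ = U₂ S₂ U₁ᵀ` (alignment `V₂ = U₁`), set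
`G = −W₂ W₁ X`, and suppose the singular values evolve by
`σ̇₁^k = (u₁^k)ᵀ Ẇ₁ v₁^k` with `Ẇ₁ = −W₂ᵀ G` and
`σ̇₂^k = (u₂^k)ᵀ Ẇ₂ v₂^k` with `Ẇ₂ = −G W₁ᵀ` (and `v₂^k = u₁^k`).  Then
`σ̇₁^k = σ₁^k (σ₂^k)² ((v₁^k)ᵀ X v₁^k)` and
`σ̇₂^k = σ₂^k (σ₁^k)² ((v₁^k)ᵀ X v₁^k)`; moreover if `X` is positive
semidefinite then the common factor `(v₁^k)ᵀ X v₁^k` is nonnegative. -/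
theorem aligned_singular_value_dynamics (n : ℕ)
    (W₁ U₁ S₁ V₁ W₂ U₂ S₂ X G : Matrix (Fin n) (Fin n) ℝ)
    (hSVD₁ : W₁ = U₁ * S₁ * V₁ᵀ) (hSVD₂ : W₂ = U₂ * S₂ * U₁ᵀ)
    (hU₁orth : U₁ᵀ * U₁ = 1) (hV₁orth : V₁ᵀ * V₁ = 1) (hU₂orth : U₂ᵀ * U₂ = 1)
    (σ₁ σ₂ : Fin n → ℝ)
    (hS₁ : S₁ = diagonal σ₁) (hS₂ : S₂ = diagonal σ₂)
    (hG : G = -(W₂ * W₁ * X))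
    (dσ₁ dσ₂ : Fin n → ℝ)
    (hdσ₁ : ∀ k, dσ₁ k =
      (fun a => U₁ a k) ⬝ᵥ ((-(W₂ᵀ) * G) *ᵥ fun a => V₁ a k))
    (hdσ₂ : ∀ k, dσ₂ k =
      (fun a => U₂ a k) ⬝ᵥ ((-G * W₁ᵀ) *ᵥ fun a => U₁ a k)) :
    (∀ k, dσ₁ k = σ₁ k * (σ₂ k) ^ 2 *
        ((fun a => V₁ a k) ⬝ᵥ (X *ᵥ fun a => V₁ a k))) ∧
    (∀ k, dσ₂ k = σ₂ k * (σ₁ k) ^ 2 *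
        ((fun a => V₁ a k) ⬝ᵥ (X *ᵥ fun a => V₁ a k))) ∧
    (X.PosSemidef → ∀ k, 0 ≤ (fun a => V₁ a k) ⬝ᵥ (X *ᵥ fun a => V₁ a k)) :=
  aligned_singular_value_dynamics_general n W₁ U₁ S₁ V₁ W₂ U₂ S₂ X G hSVD₁ hSVD₂ hU₁orth hU₂orth σ₁
    σ₂ hS₁ hS₂ hG dσ₁ dσ₂ hdσ₁ hdσ₂
end

section
/- Let σ₁, σ₂, c : ℝ → ℝ with σ₁, σ₂ differentiable, and suppose σ₁'(t) = σ₁(t) σ₂(t)² c(t) and σ₂'(t) = σ₂(t) σ₁(t)² c(t) for all t. Then σ₁(t)² − σ₂(t)² is constant in t; and, setting C := σ₂(0)² − σ₁(0)², the first equation closes to σ₁'(t) = σ₁(t) ( σ₁(t)² + C ) c(t) for all t. -/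
section AlignedPair

variable {𝕜 : Type*} [RCLike 𝕜] {f g : 𝕜 → 𝕜}

theorem hasDerivAt_sq_sub_sq_of_aligned {t a : 𝕜}
    (hf : HasDerivAt f (f t * g t ^ 2 * a) t) (hg : HasDerivAt g (g t * f t ^ 2 * a) t) :
    HasDerivAt (fun s => f s ^ 2 - g s ^ 2) 0 t :=
  ((hf.fun_pow 2).fun_sub (hg.fun_pow 2)).congr_deriv (by push_cast; ring)

theorem sq_sub_sq_eq_of_aligned {c : 𝕜 → 𝕜}
    (hf : ∀ t, HasDerivAt f (f t * g t ^ 2 * c t) t)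
    (hg : ∀ t, HasDerivAt g (g t * f t ^ 2 * c t) t) (t t₀ : 𝕜) :
    f t ^ 2 - g t ^ 2 = f t₀ ^ 2 - g t₀ ^ 2 :=
  have hderiv s := hasDerivAt_sq_sub_sq_of_aligned (hf s) (hg s)
  is_const_of_deriv_eq_zero (fun s => (hderiv s).differentiableAt) (fun s => (hderiv s).deriv) t t₀

end AlignedPair

/-- **Scalar consequence of the aligned singular-value dynamics.**
If `σ₁' = σ₁ σ₂² c` and `σ₂' = σ₂ σ₁² c`, then `σ₁² − σ₂²` is constant in
time, and with `C = σ₂(0)² − σ₁(0)²` the first equation closes to the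
autonomous law `σ₁' = σ₁ (σ₁² + C) c`. -/
theorem paired_singular_value_growth
    (σ₁ σ₂ c : ℝ → ℝ)
    (h₁ : ∀ t, HasDerivAt σ₁ (σ₁ t * σ₂ t ^ 2 * c t) t)
    (h₂ : ∀ t, HasDerivAt σ₂ (σ₂ t * σ₁ t ^ 2 * c t) t) :
    (∀ t, σ₁ t ^ 2 - σ₂ t ^ 2 = σ₁ 0 ^ 2 - σ₂ 0 ^ 2) ∧
    (∀ t, HasDerivAt σ₁
      (σ₁ t * (σ₁ t ^ 2 + (σ₂ 0 ^ 2 - σ₁ 0 ^ 2)) * c t) t) := by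
  have hconst t := sq_sub_sq_eq_of_aligned h₁ h₂ t 0
  refine ⟨hconst, fun t => ?_⟩
  have hσ₂ : σ₂ t ^ 2 = σ₁ t ^ 2 + (σ₂ 0 ^ 2 - σ₁ 0 ^ 2) := by linarith [hconst t]
  simpa only [hσ₂] using h₁ t
end
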